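/- Let M > 0, 0 < K ≤ 1, and r₀ > 2M. Define the steady shock v : (2M, ∞) → ℝ by v(r) = √(1 - K(1 - 2M/r)) for 2M < r < r₀ and v(r) = -√(1 - K(1 - 2M/r)) for r ≥ r₀, and extend it to (0, ∞) × (2M, ∞) as the time-independent function u(t, r) = v(r). Then u is a weak solution of the relativistic Burgers equation: for every continuously differentiable compactly supported test function φ on (0, ∞) × (2M, ∞), ∬ [ (u(t,r)/(1 - 2M/r)²) ∂_t φ(t,r) + ((u(t,r)² - 1)/(2(1 - 2M/r))) ∂_r φ(t,r) ] dt dr = 0. -/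

import Mathlib

/-- The steady shock profile: the positive branch √(1 - K(1 - 2M/r)) for
r < r₀ and the negative branch -√(1 - K(1 - 2M/r)) for r ≥ r₀. -/
noncomputable def steadyShock (M K r₀ : ℝ) (r : ℝ) : ℝ :=
  if r < r₀ then Real.sqrt (1 - K * (1 - 2 * M / r))
  else -Real.sqrt (1 - K * (1 - 2 * M / r))

open MeasureTheory Set Function

/-- Auxiliary coefficient `u/(1-2M/r)²`. -/
noncomputable def aCoef (M K r₀ : ℝ) (r : ℝ) : ℝ :=
  steadyShock M K r₀ r / (1 - 2 * M / r) ^ 2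

lemma measurable_steadyShock (M K r₀ : ℝ) : Measurable (steadyShock M K r₀) := by
  unfold steadyShock
  exact Measurable.ite measurableSet_Iio
    ((measurable_const.sub ((measurable_const.sub
        (measurable_const.div measurable_id)).const_mul K)).sqrt)
    ((measurable_const.sub ((measurable_const.sub
        (measurable_const.div measurable_id)).const_mul K)).sqrt.neg)

lemma measurable_aCoef (M K r₀ : ℝ) : Measurable (aCoef M K r₀) :=
  (measurable_steadyShock M K r₀).div
    ((measurable_const.sub (measurable_const.div measurable_id)).pow_const 2)

/-- For M > 0, 0 < K ≤ 1 and r₀ > 2M, the time-independent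
steady shock u(t, r) = steadyShock M K r₀ r is a weak solution of the
relativistic Burgers equation on (0, ∞) × (2M, ∞): the integral identity holds
against every continuously differentiable, compactly supported test function
supported in (0, ∞) × (2M, ∞). -/
theorem steady_shock_weak_solution (M K r₀ : ℝ) (hM : 0 < M)
    (hK0 : 0 < K) (hK1 : K ≤ 1) (hr₀ : 2 * M < r₀) :
    ∀ φ : ℝ → ℝ → ℝ,
      ContDiff ℝ 1 (Function.uncurry φ) →
      HasCompactSupport (Function.uncurry φ) →
      tsupport (Function.uncurry φ) ⊆ Set.Ioi (0 : ℝ) ×ˢ Set.Ioi (2 * M) →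
      ∫ t in Set.Ioi (0 : ℝ), ∫ r in Set.Ioi (2 * M),
          (steadyShock M K r₀ r / (1 - 2 * M / r) ^ 2
              * deriv (fun t' : ℝ => φ t' r) t
            + ((steadyShock M K r₀ r) ^ 2 - 1) / (2 * (1 - 2 * M / r))
              * deriv (fun r' : ℝ => φ t r') r) = 0 := by
  intro φ hφ hφc hsub
  set F := Function.uncurry φ with hF
  set S := tsupport F with hS
  -- the partial derivative in t, as a function of the pair
  set Dt : ℝ × ℝ → ℝ := fun p => fderiv ℝ F p (1, 0) with hDt
  -- basic facts about the support
  have hzero : ∀ p : ℝ × ℝ, p ∉ S → fderiv ℝ F p = 0 := by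
    intro p hp
    have hev : F =ᶠ[nhds p] 0 := by
      filter_upwards [(isClosed_tsupport F).isOpen_compl.mem_nhds hp] with q hq
      exact image_eq_zero_of_notMem_tsupport hq
    rw [hev.fderiv_eq]
    exact fderiv_const_apply (0:ℝ)
  have hFzero : ∀ p : ℝ × ℝ, p ∉ S → F p = 0 := fun p hp =>
    image_eq_zero_of_notMem_tsupport hp
  -- enlarge the support so projections are nonempty
  set T : Set (ℝ × ℝ) := insert ((1 : ℝ), 2 * M + 1) S with hTdef
  have hST : S ⊆ T := subset_insert _ _
  have hT : IsCompact T := IsCompact.insert hφc _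
  have hT_sub : T ⊆ Set.Ioi (0 : ℝ) ×ˢ Set.Ioi (2 * M) := by
    rw [hTdef]
    refine insert_subset ?_ hsub
    exact ⟨by norm_num, by simp⟩
  set K1 : Set ℝ := Prod.fst '' T with hK1def
  set K2 : Set ℝ := Prod.snd '' T with hK2def
  have hK1c : IsCompact K1 := hT.image continuous_fst
  have hK2c : IsCompact K2 := hT.image continuous_snd
  have hK2ne : K2.Nonempty := ⟨2 * M + 1, ⟨_, mem_insert _ _, rfl⟩⟩
  have hK2sub : K2 ⊆ Set.Ioi (2 * M) := by
    rintro r ⟨p, hp, rfl⟩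
    exact (hT_sub hp).2
  set m : ℝ := sInf K2 with hmdef
  have hm_mem : m ∈ K2 := hK2c.sInf_mem hK2ne
  have hm : 2 * M < m := hK2sub hm_mem
  have hm0 : 0 < m := lt_trans (by positivity) hm
  have hle : ∀ r ∈ K2, m ≤ r := fun r hr => csInf_le hK2c.bddBelow hr
  set c : ℝ := 1 - 2 * M / m with hcdef
  have hc : 0 < c := by
    rw [hcdef, sub_pos]
    exact (div_lt_one hm0).2 hm
  set Ca : ℝ := 1 / c ^ 2 with hCadef
  -- bound on the coefficient on K2
  have ha_bound : ∀ r ∈ K2, |aCoef M K r₀ r| ≤ Ca := by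
    intro r hr
    have hrm : m ≤ r := hle r hr
    have hr2M : 2 * M < r := lt_of_lt_of_le hm hrm
    have hr0 : 0 < r := lt_trans (by positivity) hr2M
    have hxc : c ≤ 1 - 2 * M / r := by
      have : 2 * M / r ≤ 2 * M / m :=
        div_le_div_of_nonneg_left (by positivity) hm0 hrm
      linarith
    have hx0 : 0 < 1 - 2 * M / r := lt_of_lt_of_le hc hxc
    have hsq : c ^ 2 ≤ (1 - 2 * M / r) ^ 2 := pow_le_pow_left₀ hc.le hxc 2
    have hss : |steadyShock M K r₀ r| ≤ 1 := by
      have harg : 1 - K * (1 - 2 * M / r) ≤ 1 := by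
        have : 0 ≤ K * (1 - 2 * M / r) := by positivity
        linarith
      unfold steadyShock
      split_ifs with h
      · rw [abs_of_nonneg (Real.sqrt_nonneg _)]
        exact Real.sqrt_le_one.mpr harg
      · rw [abs_neg, abs_of_nonneg (Real.sqrt_nonneg _)]
        exact Real.sqrt_le_one.mpr harg
    have : |aCoef M K r₀ r| = |steadyShock M K r₀ r| / (1 - 2 * M / r) ^ 2 := by
      rw [aCoef, abs_div, abs_of_nonneg (by positivity : (0:ℝ) ≤ (1 - 2*M/r)^2)]
    rw [this, hCadef]
    exact div_le_div₀ zero_le_one hss (by positivity) hsq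
  -- the flux coefficient is the constant -K/2 on r > 2M
  have hcoef : ∀ r : ℝ, 2 * M < r →
      ((steadyShock M K r₀ r) ^ 2 - 1) / (2 * (1 - 2 * M / r)) = -(K / 2) := by
    intro r hr
    have hr0 : 0 < r := lt_trans (by positivity) hr
    have hx0 : 0 < 1 - 2 * M / r := by
      rw [sub_pos]; exact (div_lt_one hr0).2 hr
    have hx1 : 1 - 2 * M / r ≤ 1 := by
      have : 0 ≤ 2 * M / r := by positivity
      linarith
    have h0 : 0 ≤ 1 - K * (1 - 2 * M / r) := by
      have : K * (1 - 2 * M / r) ≤ 1 := mul_le_one₀ hK1 hx0.le hx1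
      linarith
    have hsq : (steadyShock M K r₀ r) ^ 2 = 1 - K * (1 - 2 * M / r) := by
      unfold steadyShock
      split_ifs with h
      · exact Real.sq_sqrt h0
      · rw [neg_pow, Real.sq_sqrt h0]; ring
    rw [hsq, div_eq_iff (by positivity : (2 * (1 - 2 * M / r)) ≠ 0)]
    ring
  -- the partial derivative in t equals Dt
  have hderiv_t : ∀ (t r : ℝ), deriv (fun t' : ℝ => φ t' r) t = Dt (t, r) := by
    intro t r
    have hline : HasDerivAt (fun t' : ℝ => ((t', r) : ℝ × ℝ)) (1, 0) t :=
      (hasDerivAt_id t).prodMk (hasDerivAt_const t r)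
    have hFd : HasFDerivAt F (fderiv ℝ F (t, r)) (t, r) :=
      (hφ.differentiable one_ne_zero (t, r)).hasFDerivAt
    exact (hFd.comp_hasDerivAt t hline).deriv
  have hDt_cont : Continuous Dt :=
    (hφ.continuous_fderiv one_ne_zero).clm_apply continuous_const
  have hDt_zero : ∀ p : ℝ × ℝ, p ∉ S → Dt p = 0 := by
    intro p hp
    rw [hDt]; simp only; rw [hzero p hp]; rfl
  have hDt_cs : HasCompactSupport Dt :=
    HasCompactSupport.intro hT fun p hp => hDt_zero p (fun h => hp (hST h))
  -- slices of φ
  have hslice_t_cd : ∀ r : ℝ, ContDiff ℝ 1 (fun t : ℝ => φ t r) := fun r =>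
    hφ.comp (contDiff_id.prodMk contDiff_const)
  have hslice_t_cs : ∀ r : ℝ, HasCompactSupport (fun t : ℝ => φ t r) := by
    intro r
    refine HasCompactSupport.intro hK1c fun t ht => ?_
    by_contra h
    exact ht ⟨(t, r), hST (subset_tsupport F (by exact h)), rfl⟩
  have hslice_r_cd : ∀ t : ℝ, ContDiff ℝ 1 (φ t) := fun t =>
    hφ.comp (contDiff_const.prodMk contDiff_id)
  have hslice_r_cs : ∀ t : ℝ, HasCompactSupport (φ t) := by
    intro t
    refine HasCompactSupport.intro hK2c fun r hr => ?_
    by_contra h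
    exact hr ⟨(t, r), hST (subset_tsupport F (by exact h)), rfl⟩
  -- the pointwise bound for the first term
  have hbound : ∀ p : ℝ × ℝ, ‖aCoef M K r₀ p.2 * Dt p‖ ≤ Ca * ‖Dt p‖ := by
    intro p
    by_cases h : Dt p = 0
    · simp [h]
    · have hpS : p ∈ S := by
        by_contra hp
        exact h (hDt_zero p hp)
      have hp2 : p.2 ∈ K2 := ⟨p, hST hpS, rfl⟩
      rw [norm_mul]
      exact mul_le_mul_of_nonneg_right
        (by rw [Real.norm_eq_abs]; exact ha_bound _ hp2) (norm_nonneg _)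
  -- integrability of the first term, slice in r for fixed t
  have hint1 : ∀ t : ℝ, Integrable (fun r => aCoef M K r₀ r * Dt (t, r)) := by
    intro t
    have hcont : Continuous (fun r : ℝ => Dt (t, r)) :=
      hDt_cont.comp (continuous_const.prodMk continuous_id)
    have hcs : HasCompactSupport (fun r : ℝ => Dt (t, r)) := by
      refine HasCompactSupport.intro hK2c fun r hr => ?_
      refine hDt_zero _ fun h => hr ⟨(t, r), hST h, rfl⟩
    refine Integrable.mono' ((hcont.integrable_of_hasCompactSupport hcs).norm.const_mul Ca)
      (((measurable_aCoef M K r₀).mul hcont.measurable).aestronglyMeasurable)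
      (Filter.Eventually.of_forall fun r => hbound (t, r))
  -- integrability of the first term on the product
  have hprod : Integrable (uncurry fun t r => aCoef M K r₀ r * Dt (t, r))
      ((volume.restrict (Set.Ioi (0:ℝ))).prod (volume.restrict (Set.Ioi (2*M)))) := by
    rw [Measure.prod_restrict]
    refine Integrable.restrict ?_
    refine Integrable.mono' (((hDt_cont.integrable_of_hasCompactSupport hDt_cs).norm).const_mul Ca)
      ?_ (Filter.Eventually.of_forall fun p => hbound p)
    exact (((measurable_aCoef M K r₀).comp measurable_snd).mul hDt_cont.measurable).aestronglyMeasurable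
  -- rewrite the inner integral
  have hIinner : ∀ t : ℝ,
      (∫ r in Set.Ioi (2 * M),
          (steadyShock M K r₀ r / (1 - 2 * M / r) ^ 2
              * deriv (fun t' : ℝ => φ t' r) t
            + ((steadyShock M K r₀ r) ^ 2 - 1) / (2 * (1 - 2 * M / r))
              * deriv (fun r' : ℝ => φ t r') r))
        = ∫ r in Set.Ioi (2 * M), aCoef M K r₀ r * Dt (t, r) := by
    intro t
    have hcongr : ∀ r ∈ Set.Ioi (2 * M),
        (steadyShock M K r₀ r / (1 - 2 * M / r) ^ 2
              * deriv (fun t' : ℝ => φ t' r) t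
            + ((steadyShock M K r₀ r) ^ 2 - 1) / (2 * (1 - 2 * M / r))
              * deriv (fun r' : ℝ => φ t r') r)
          = aCoef M K r₀ r * Dt (t, r) + (-(K / 2)) * deriv (φ t) r := by
      intro r hr
      rw [hderiv_t t r, hcoef r hr]
      rfl
    rw [setIntegral_congr_fun measurableSet_Ioi hcongr]
    have hint2 : Integrable (fun r => (-(K / 2)) * deriv (φ t) r) :=
      (continuous_const.mul ((hslice_r_cd t).continuous_deriv le_rfl)).integrable_of_hasCompactSupport
        (((hslice_r_cs t).deriv).mul_left)
    rw [integral_add ((hint1 t).integrableOn) (hint2.integrableOn)]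
    have : ∫ r in Set.Ioi (2 * M), (-(K / 2)) * deriv (φ t) r
        = (-(K / 2)) * ∫ r in Set.Ioi (2 * M), deriv (φ t) r := by
      rw [integral_const_mul]
    rw [this, (hslice_r_cs t).integral_Ioi_deriv_eq (hslice_r_cd t) (2 * M)]
    have hφt2M : φ t (2 * M) = 0 := by
      refine hFzero (t, 2 * M) fun h => ?_
      exact lt_irrefl (2 * M) (hsub h).2
    rw [hφt2M]
    ring
  calc
    (∫ t in Set.Ioi (0:ℝ), ∫ r in Set.Ioi (2 * M),
          (steadyShock M K r₀ r / (1 - 2 * M / r) ^ 2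
              * deriv (fun t' : ℝ => φ t' r) t
            + ((steadyShock M K r₀ r) ^ 2 - 1) / (2 * (1 - 2 * M / r))
              * deriv (fun r' : ℝ => φ t r') r))
        = ∫ t in Set.Ioi (0:ℝ), ∫ r in Set.Ioi (2 * M), aCoef M K r₀ r * Dt (t, r) := by
          exact setIntegral_congr_fun measurableSet_Ioi fun t _ => hIinner t
    _ = ∫ r in Set.Ioi (2 * M), ∫ t in Set.Ioi (0:ℝ), aCoef M K r₀ r * Dt (t, r) :=
          integral_integral_swap hprod
    _ = ∫ r in Set.Ioi (2 * M), aCoef M K r₀ r * ∫ t in Set.Ioi (0:ℝ), Dt (t, r) := by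
          refine setIntegral_congr_fun measurableSet_Ioi fun r _ => ?_
          rw [integral_const_mul]
    _ = 0 := by
          refine setIntegral_eq_zero_of_forall_eq_zero fun r hr => ?_
          have : ∫ t in Set.Ioi (0:ℝ), Dt (t, r) = 0 := by
            have h1 : ∫ t in Set.Ioi (0:ℝ), deriv (fun t' : ℝ => φ t' r) t
                = -(φ 0 r) :=
              (hslice_t_cs r).integral_Ioi_deriv_eq (hslice_t_cd r) 0
            have h2 : φ 0 r = 0 := by
              refine hFzero (0, r) fun h => ?_
              exact lt_irrefl (0:ℝ) (hsub h).1
            calc ∫ t in Set.Ioi (0:ℝ), Dt (t, r)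
                = ∫ t in Set.Ioi (0:ℝ), deriv (fun t' : ℝ => φ t' r) t := by
                  simp only [← hderiv_t]
              _ = -(φ 0 r) := h1
              _ = 0 := by rw [h2, neg_zero]
          rw [this, mul_zero]
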